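/- Fix ℏ > 0 and let ψ : ℝ → ℂ be a Schwartz function. Then for every q ∈ ℝ, the momentum marginal of the Wigner function recovers the position density: ∫_ℝ W_ψ(q, p) dp = |ψ(q)|². -/

import Mathlib

/-!
For fixed `q`, `W_ψ(q, p)` is `(2π)⁻¹` times the Fourier transform, at `-p / 2π`, of the
correlation `G s = conj ψ(q + ℏs/2) · ψ(q - ℏs/2)`, which is a Schwartz function of `s`
because `ℏ ≠ 0`. Integrating over `p` therefore gives `∫ 𝓕G = G 0 = |ψ q|²` by Fourier
inversion at the origin.
-/

open MeasureTheory

/-- The Wigner function of `ψ : ℝ → ℂ` (with Planck constant `h`):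
`W_ψ(q,p) = (1/(2π)) ∫ conj(ψ(q + h s/2)) ψ(q − h s/2) e^{i p s} ds`. -/
noncomputable def wigner (h : ℝ) (ψ : ℝ → ℂ) (q p : ℝ) : ℂ :=
  (1 / (2 * Real.pi) : ℂ) *
    ∫ s : ℝ, (starRingEnd ℂ) (ψ (q + h * s / 2)) * ψ (q - h * s / 2) *
      Complex.exp (Complex.I * (p : ℂ) * (s : ℂ))

open FourierTransform ComplexConjugate
open scoped SchwartzMap

namespace SchwartzMap

theorem integral_fourier_eq {V E : Type*} [NormedAddCommGroup V] [InnerProductSpace ℝ V]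
    [FiniteDimensional ℝ V] [MeasurableSpace V] [BorelSpace V] [NormedAddCommGroup E]
    [NormedSpace ℂ E] [CompleteSpace E] (f : 𝓢(V, E)) : ∫ ξ, 𝓕 (f : V → E) ξ = f 0 := by
  have := congrFun (f.continuous.fourierInv_fourier_eq f.integrable (𝓕 f).integrable) 0
  simpa [Real.fourierInv_eq] using this

theorem exists_comp_affine {E : Type*} [NormedAddCommGroup E] [NormedSpace ℝ E]
    (f : 𝓢(ℝ, E)) (b : ℝ) {a : ℝ} (ha : a ≠ 0) : ∃ g : 𝓢(ℝ, E), ∀ s, g s = f (b + a * s) :=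
  ⟨compCLMOfContinuousLinearEquiv ℝ (ContinuousLinearEquiv.unitsEquivAut ℝ (Units.mk0 a ha))
    (compSubConstCLM ℝ (-b) f), fun s => by simp [add_comm, mul_comm]⟩

theorem exists_conj_mul {V : Type*} [NormedAddCommGroup V] [NormedSpace ℝ V] (f g : 𝓢(V, ℂ)) :
    ∃ h : 𝓢(V, ℂ), ∀ x, h x = conj (f x) * g x :=
  ⟨pairing (ContinuousLinearMap.mul ℝ ℂ)
    (postcompCLM (𝕜 := ℝ) Complex.conjCLE.toContinuousLinearMap f) g,
    fun x => by simp⟩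

end SchwartzMap

noncomputable def wignerCorrelation (h : ℝ) (ψ : ℝ → ℂ) (q s : ℝ) : ℂ :=
  conj (ψ (q + h * s / 2)) * ψ (q - h * s / 2)

theorem wignerCorrelation_zero (h : ℝ) (ψ : ℝ → ℂ) (q : ℝ) :
    wignerCorrelation h ψ q 0 = ((‖ψ q‖ ^ 2 : ℝ) : ℂ) := by
  simp [wignerCorrelation, Complex.conj_mul']

theorem wigner_eq_fourier (h : ℝ) (ψ : ℝ → ℂ) (q p : ℝ) :
    wigner h ψ q p = (2 * Real.pi : ℂ)⁻¹ * 𝓕 (wignerCorrelation h ψ q) (p / -(2 * Real.pi)) := by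
  rw [wigner, Real.fourier_real_eq_integral_exp_smul, one_div]
  congr 2 with s
  rw [smul_eq_mul, mul_comm, wignerCorrelation]
  congr 2
  push_cast
  field_simp

theorem exists_schwartz_wignerCorrelation {h : ℝ} (hh : h ≠ 0) (ψ : 𝓢(ℝ, ℂ)) (q : ℝ) :
    ∃ G : 𝓢(ℝ, ℂ), ⇑G = wignerCorrelation h ψ q := by
  obtain ⟨ψ₁, hψ₁⟩ := ψ.exists_comp_affine q (a := h / 2) (by positivity)
  obtain ⟨ψ₂, hψ₂⟩ := ψ.exists_comp_affine q (a := -(h / 2)) (by simpa using hh)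
  obtain ⟨G, hG⟩ := SchwartzMap.exists_conj_mul ψ₁ ψ₂
  refine ⟨G, funext fun s => ?_⟩
  rw [hG, hψ₁, hψ₂, wignerCorrelation]
  ring_nf

theorem stmt_14 (ℏ : ℝ) (hℏ : 0 < ℏ) (ψ : SchwartzMap ℝ ℂ) (q : ℝ) :
    ∫ p : ℝ, wigner ℏ ψ q p = ((‖ψ q‖ ^ 2 : ℝ) : ℂ) := by
  obtain ⟨G, hG⟩ := exists_schwartz_wignerCorrelation hℏ.ne' ψ q
  have hπ : (2 * Real.pi : ℂ) ≠ 0 := by exact_mod_cast Real.two_pi_pos.ne'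
  calc ∫ p : ℝ, wigner ℏ ψ q p
      = (2 * Real.pi : ℂ)⁻¹ * ∫ p : ℝ, 𝓕 (⇑G) (p / -(2 * Real.pi)) := by
        simp_rw [wigner_eq_fourier, ← hG, integral_const_mul]
    _ = (2 * Real.pi : ℂ)⁻¹ * ((2 * Real.pi : ℝ) • ∫ ξ : ℝ, 𝓕 (⇑G) ξ) := by
        rw [Measure.integral_comp_div, abs_neg, abs_of_pos Real.two_pi_pos]
    _ = G 0 := by
        rw [G.integral_fourier_eq, Complex.real_smul, ← mul_assoc]
        push_cast
        rw [inv_mul_cancel₀ hπ, one_mul]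
    _ = ((‖ψ q‖ ^ 2 : ℝ) : ℂ) := by rw [hG, wignerCorrelation_zero]
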